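/- Let (X,r) be a non-degenerate involutive set-theoretic solution to the Yang–Baxter equation. If k: X → X satisfies k ∘ σ_x = σ_x ∘ k for all x ∈ X (i.e., k is equivariant for the permutation group generated by the σ_x), then k is a reflection of (X,r). -/
import Mathlib


/-- `r × id` acting on triples. -/
def r1map {X : Type*} (r : X × X → X × X) : X × X × X → X × X × X :=
  fun p => ((r (p.1, p.2.1)).1, (r (p.1, p.2.1)).2, p.2.2)

/-- `id × r` acting on triples. -/
def r2map {X : Type*} (r : X × X → X × X) : X × X × X → X × X × X :=
  fun p => (p.1, r p.2)

/-- `id × k` on pairs. -/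
def k2map {X : Type*} (k : X → X) : X × X → X × X := fun p => (p.1, k p.2)

/-- `k × id` on pairs. -/
def k1map {X : Type*} (k : X → X) : X × X → X × X := fun p => (k p.1, p.2)

/-- Theorem 1.8: each G(X,r)-equivariant map (i.e. commuting with all σ_x)
is a reflection of an involutive non-degenerate solution. -/
theorem statement3 {X : Type*} (σ τ : X → X ≃ X) (k : X → X)
    (r : X × X → X × X) (hr : ∀ x y, r (x, y) = (σ x y, τ y x))
    (hbraid : r1map r ∘ r2map r ∘ r1map r = r2map r ∘ r1map r ∘ r2map r)
    (hinv : r ∘ r = id)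
    (hequiv : ∀ x y : X, k (σ x y) = σ x (k y)) :
    r ∘ k2map k ∘ r ∘ k2map k = k2map k ∘ r ∘ k2map k ∘ r := by
  -- From involutivity: σ (σ x y) (τ y x) = x
  have hA : ∀ x y : X, σ (σ x y) (τ y x) = x := by
    intro x y
    have := congrFun hinv (x, y)
    simp only [Function.comp_apply, hr, id_eq] at this
    exact congrArg Prod.fst this
  -- hence τ y x = (σ (σ x y)).symm x
  have hτ : ∀ x y : X, τ y x = (σ (σ x y)).symm x := by
    intro x y
    exact ((σ (σ x y)).symm_apply_eq.mpr (hA x y).symm).symm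
  -- k commutes with σ z inverse
  have hequiv' : ∀ z w : X, k ((σ z).symm w) = (σ z).symm (k w) := by
    intro z w
    apply (σ z).injective
    rw [Equiv.apply_symm_apply, ← hequiv, Equiv.apply_symm_apply]
  funext p
  obtain ⟨x, y⟩ := p
  simp only [Function.comp_apply, k2map, hr]
  have h1 : σ (σ x (k y)) (k (τ (k y) x)) = k x := by
    rw [← hequiv, hA]
  have h2 : σ (σ x y) (k (τ y x)) = k x := by
    rw [← hequiv, hA]
  refine Prod.ext ?_ ?_
  · simpa using h1.trans h2.symm
  · show τ (k (τ (k y) x)) (σ x (k y)) = k (τ (k (τ y x)) (σ x y))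
    rw [hτ (σ x (k y)) (k (τ (k y) x)), h1,
        hτ (σ x y) (k (τ y x)), h2, hequiv', hequiv]
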